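/- Let q be a complex number with 0 < |q| < 1. Define the sequence α by α_0 = 1, and for n ≥ 1: α_{3n−1} = −q^{6n²−5n+1}, α_{3n} = q^{6n²−n} + q^{6n²+n}, and for n ≥ 0: α_{3n+1} = −q^{6n²+5n+1}. Then for every integer n ≥ 0, 1/(q;q)_{2n} = ∑_{i=0}^n α_i / ((q;q)_{n−i} (q;q)_{n+i}); that is, (α_n, 1/(q;q)_{2n}) is a Bailey pair relative to (1;q). -/

import Mathlib

/-!
Multiplying by `(q;q)_{2n}` turns the claim into `∑_{j ∈ ℤ} c_j [2n, n+j]_q = 1`, where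
`c_j = χ(j) q^{j(2j+1)/3}` with `χ(j) = 1, -1, 0` for `j ≡ 0, 1, 2 (mod 3)`: indeed
`α_i = c_i + c_{-i}` for `i > 0`. Two `q`-Pascal steps write the sum for `n + 1` as the sum for `n`
plus `∑_j c_j q^{n+1+j} [2n, n+1+j]_q` and `∑_j c_j q^{n+1-j} [2n+1, n+j]_q`. By the symmetry of
the Gaussian binomials, the summands of these two sums change sign under the involutions
`j ↦ -j-2` and `j ↦ 1-j` of `ℤ`, so both vanish, and induction on `n` finishes the proof.
-/

open scoped BigOperators

/-- Finite q-Pochhammer symbol $(a;q)_n = \prod_{k=0}^{n-1}(1-aq^k)$. -/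
noncomputable def qPoch (a q : ℂ) (n : ℕ) : ℂ := ∏ k ∈ Finset.range n, (1 - a * q ^ k)

/-- Infinite q-Pochhammer symbol $(a;q)_\infty = \prod_{k=0}^{\infty}(1-aq^k)$. -/
noncomputable def qPochInf (a q : ℂ) : ℂ := ∏' k : ℕ, (1 - a * q ^ k)

/-- Jacobi theta function $j(z;q) = (z;q)_\infty (q/z;q)_\infty (q;q)_\infty$. -/
noncomputable def jt (z q : ℂ) : ℂ := qPochInf z q * qPochInf (q / z) q * qPochInf q q

/-- $J_{a,m} = j(q^a;q^m)$. -/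
noncomputable def Jq (q : ℂ) (a m : ℕ) : ℂ := jt (q ^ a) (q ^ m)

/-- $\bar J_{a,m} = j(-q^a;q^m)$. -/
noncomputable def Jbq (q : ℂ) (a m : ℕ) : ℂ := jt (-q ^ a) (q ^ m)

/-- $J_m = (q^m;q^m)_\infty$. -/
noncomputable def Jmq (q : ℂ) (m : ℕ) : ℂ := qPochInf (q ^ m) (q ^ m)

/-- sign function: 1 for r ≥ 0, -1 for r < 0. -/
noncomputable def sg (r : ℤ) : ℂ := if 0 ≤ r then 1 else -1

/-- Hecke-type series
$f_{a,b,c}(x,y,q) = \sum_{sg(r)=sg(s)} sg(r)(-1)^{r+s} x^r y^s q^{a\binom r2 + brs + c\binom s2}$. -/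
noncomputable def hecke (a b c : ℤ) (x y q : ℂ) : ℂ :=
  ∑' p : ℤ × ℤ,
    if (0 ≤ p.1 ↔ 0 ≤ p.2) then
      sg p.1 * (-1 : ℂ) ^ (p.1 + p.2) * x ^ p.1 * y ^ p.2 *
        q ^ (a * (p.1 * (p.1 - 1) / 2) + b * p.1 * p.2 + c * (p.2 * (p.2 - 1) / 2))
    else 0

/-- Appell–Lerch sum
$m(x,q,z) = \frac{1}{j(z;q)} \sum_{r\in\mathbb Z} \frac{(-1)^r q^{\binom r2} z^r}{1-q^{r-1}xz}$. -/
noncomputable def appell (x q z : ℂ) : ℂ :=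
  (1 / jt z q) *
    ∑' r : ℤ, (-1 : ℂ) ^ r * q ^ (r * (r - 1) / 2) * z ^ r / (1 - q ^ (r - 1) * x * z)

open Function

section QBinomial

variable {q : ℂ}

lemma qPoch_succ (n : ℕ) : qPoch q q (n + 1) = qPoch q q n * (1 - q ^ (n + 1)) := by
  rw [qPoch, Finset.prod_range_succ, ← qPoch, pow_succ' q n]

lemma qPoch_ne_zero (hq : ∀ n : ℕ, q ^ (n + 1) ≠ 1) (n : ℕ) : qPoch q q n ≠ 0 := by
  induction n with
  | zero => simp [qPoch]
  | succ n ih => rw [qPoch_succ]; exact mul_ne_zero ih (sub_ne_zero.mpr (hq n).symm)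

/-- `1 / (q;q)_k`, extended by `0` to negative `k` so that `invQPoch_sub_one` holds for every
`k : ℤ`; this makes the `q`-Pascal rules free of case distinctions. -/
noncomputable def invQPoch (q : ℂ) (k : ℤ) : ℂ :=
  if 0 ≤ k then (qPoch q q k.toNat)⁻¹ else 0

lemma invQPoch_natCast (n : ℕ) : invQPoch q n = (qPoch q q n)⁻¹ := by
  simp [invQPoch]

lemma invQPoch_of_neg {k : ℤ} (hk : k < 0) : invQPoch q k = 0 := by
  simp [invQPoch, not_le.mpr hk]

lemma invQPoch_sub_one (hq : ∀ n : ℕ, q ^ (n + 1) ≠ 1) (k : ℤ) :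
    invQPoch q (k - 1) = (1 - q ^ k) * invQPoch q k := by
  rcases lt_trichotomy k 0 with hk | rfl | hk
  · rw [invQPoch_of_neg (by omega), invQPoch_of_neg hk, mul_zero]
  · simp [invQPoch_of_neg]
  · obtain ⟨n, rfl⟩ : ∃ n : ℕ, k = n + 1 := ⟨(k - 1).toNat, by omega⟩
    have hn : (1 : ℂ) - q ^ (n + 1) ≠ 0 := sub_ne_zero.mpr (hq n).symm
    rw [add_sub_cancel_right, ← Nat.cast_succ, invQPoch_natCast, invQPoch_natCast, zpow_natCast,
      qPoch_succ, mul_inv, mul_left_comm, mul_inv_cancel₀ hn, mul_one]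

/-- The Gaussian binomial coefficient `[N, k]_q`. -/
noncomputable def qbin (q : ℂ) (N : ℕ) (k : ℤ) : ℂ :=
  qPoch q q N * invQPoch q k * invQPoch q (N - k)

lemma qbin_sub (N : ℕ) (k : ℤ) : qbin q N (N - k) = qbin q N k := by
  rw [qbin, qbin, sub_sub_cancel, mul_right_comm]

lemma qbin_of_add_eq {N : ℕ} {k k' : ℤ} (h : k + k' = N) : qbin q N k' = qbin q N k := by
  rw [← qbin_sub N k, show k' = N - k by omega]

lemma qbin_of_neg {N : ℕ} {k : ℤ} (hk : k < 0) : qbin q N k = 0 := by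
  rw [qbin, invQPoch_of_neg hk, mul_zero, zero_mul]

lemma qbin_of_lt {N : ℕ} {k : ℤ} (hk : N < k) : qbin q N k = 0 := by
  rw [qbin, invQPoch_of_neg (show (N : ℤ) - k < 0 by omega), mul_zero]

lemma qbin_of_le {N k : ℕ} (hk : k ≤ N) :
    qbin q N k = qPoch q q N * (qPoch q q k)⁻¹ * (qPoch q q (N - k))⁻¹ := by
  rw [qbin, ← Nat.cast_sub hk, invQPoch_natCast, invQPoch_natCast]

lemma qbin_zero_zero : qbin q 0 0 = 1 := by
  simp [qbin, invQPoch, qPoch]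

lemma qbin_succ (hq : ∀ n : ℕ, q ^ (n + 1) ≠ 1) (N : ℕ) (k : ℤ) :
    qbin q (N + 1) k = qbin q N k + q ^ ((N : ℤ) + 1 - k) * qbin q N (k - 1) := by
  have hpow : q ^ ((N : ℤ) + 1 - k) * q ^ k = q ^ (N + 1) := by
    rw [← zpow_add' (Or.inr (Or.inl (by omega))), sub_add_cancel, ← Nat.cast_succ, zpow_natCast]
  have hN : (N : ℤ) - k = (N + 1 - k) - 1 := by ring
  have hN' : (N : ℤ) - (k - 1) = N + 1 - k := by ring
  simp only [qbin]
  rw [Nat.cast_succ, hN', hN, invQPoch_sub_one hq (_ + 1 - k), invQPoch_sub_one hq k, qPoch_succ]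
  linear_combination (qPoch q q N * invQPoch q k * invQPoch q (N + 1 - k)) * hpow

lemma qbin_succ' (hq : ∀ n : ℕ, q ^ (n + 1) ≠ 1) (N : ℕ) (k : ℤ) :
    qbin q (N + 1) k = q ^ k * qbin q N k + qbin q N (k - 1) := by
  rw [← qbin_sub, qbin_succ hq, ← qbin_sub N (k - 1), ← qbin_sub N (_ - 1)]
  push_cast
  ring_nf

lemma qbin_add_two (hq : ∀ n : ℕ, q ^ (n + 1) ≠ 1) (M : ℕ) (k : ℤ) :
    qbin q (M + 2) (k + 1) =
      qbin q M k + q ^ (k + 1) * qbin q M (k + 1) + q ^ ((M : ℤ) + 1 - k) * qbin q (M + 1) k := by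
  rw [qbin_succ hq (M + 1), qbin_succ' hq M, add_sub_cancel_right]
  push_cast
  ring_nf

lemma summable_mul_qbin (w : ℤ → ℂ) (N : ℕ) {k : ℤ → ℤ} (hk : Injective k) :
    Summable fun j => w j * qbin q N (k j) := by
  refine summable_of_ne_finset_zero (s := (Finset.Icc 0 (N : ℤ)).preimage k hk.injOn) ?_
  intro j hj
  simp only [Finset.mem_preimage, Finset.mem_Icc, not_and_or, not_le] at hj
  rcases hj with hj | hj
  · rw [qbin_of_neg hj, mul_zero]
  · rw [qbin_of_lt hj, mul_zero]

end QBinomial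

lemma tsum_eq_zero_of_comp_eq_neg {β : Type*} {f : β → ℂ} {σ : β → β}
    (hσ : Involutive σ) (hf : ∀ b, f (σ b) = -f b) : ∑' b, f b = 0 := by
  have h : ∑' b, f b = -∑' b, f b := by
    rw [← tsum_neg, ← (hσ.toPerm σ).tsum_eq]
    exact tsum_congr fun b => by simp [hf]
  exact CharZero.eq_neg_self_iff.mp h

section Coeff

variable {q : ℂ}

noncomputable def bilateralCoeff (q : ℂ) (j : ℤ) : ℂ :=
  if j % 3 = 0 then q ^ (6 * (j / 3) ^ 2 + j / 3)
  else if j % 3 = 1 then -q ^ (6 * (j / 3) ^ 2 + 5 * (j / 3) + 1) else 0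

lemma bilateralCoeff_three_mul (m : ℤ) : bilateralCoeff q (3 * m) = q ^ (6 * m ^ 2 + m) := by
  have h : 3 * m / 3 = m := by omega
  simp [bilateralCoeff, h]

lemma bilateralCoeff_three_mul_add_one (m : ℤ) :
    bilateralCoeff q (3 * m + 1) = -q ^ (6 * m ^ 2 + 5 * m + 1) := by
  have h : (3 * m + 1) / 3 = m := by omega
  have h' : (3 * m + 1) % 3 = 1 := by omega
  simp [bilateralCoeff, h, h']

lemma bilateralCoeff_three_mul_add_two (m : ℤ) : bilateralCoeff q (3 * m + 2) = 0 := by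
  have h : (3 * m + 2) % 3 = 2 := by omega
  simp [bilateralCoeff, h]

lemma exists_eq_three_mul (j : ℤ) : ∃ m, j = 3 * m ∨ j = 3 * m + 1 ∨ j = 3 * m + 2 :=
  ⟨j / 3, by omega⟩

lemma bilateralCoeff_neg_sub_two (hq : q ≠ 0) (s j : ℤ) :
    bilateralCoeff q (-j - 2) * q ^ (s + (-j - 2)) = -(bilateralCoeff q j * q ^ (s + j)) := by
  obtain ⟨m, rfl | rfl | rfl⟩ := exists_eq_three_mul j
  · rw [show -(3 * m) - 2 = 3 * (-m - 1) + 1 by ring, bilateralCoeff_three_mul_add_one,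
      bilateralCoeff_three_mul]
    simp only [neg_mul, neg_inj, ← zpow_add₀ hq]
    ring_nf
  · rw [show -(3 * m + 1) - 2 = 3 * (-m - 1) by ring, bilateralCoeff_three_mul,
      bilateralCoeff_three_mul_add_one]
    simp only [neg_mul, neg_neg, ← zpow_add₀ hq]
    ring_nf
  · rw [show -(3 * m + 2) - 2 = 3 * (-m - 2) + 2 by ring, bilateralCoeff_three_mul_add_two,
      bilateralCoeff_three_mul_add_two]
    ring

lemma bilateralCoeff_one_sub (hq : q ≠ 0) (s j : ℤ) :
    bilateralCoeff q (1 - j) * q ^ (s - (1 - j)) = -(bilateralCoeff q j * q ^ (s - j)) := by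
  obtain ⟨m, rfl | rfl | rfl⟩ := exists_eq_three_mul j
  · rw [show 1 - 3 * m = 3 * (-m) + 1 by ring, bilateralCoeff_three_mul_add_one,
      bilateralCoeff_three_mul]
    simp only [neg_mul, neg_inj, ← zpow_add₀ hq]
    ring_nf
  · rw [show 1 - (3 * m + 1) = 3 * (-m) by ring, bilateralCoeff_three_mul,
      bilateralCoeff_three_mul_add_one]
    simp only [neg_mul, neg_neg, ← zpow_add₀ hq]
    ring_nf
  · rw [show 1 - (3 * m + 2) = 3 * (-m - 1) + 2 by ring, bilateralCoeff_three_mul_add_two,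
      bilateralCoeff_three_mul_add_two]
    ring

end Coeff

section BilateralSum

variable {q : ℂ}

noncomputable def bilateralSum (q : ℂ) (n : ℕ) : ℂ :=
  ∑' j : ℤ, bilateralCoeff q j * qbin q (2 * n) (n + j)

lemma bilateralSum_zero : bilateralSum q 0 = 1 := by
  rw [bilateralSum, tsum_eq_single 0]
  · simp [bilateralCoeff, qbin_zero_zero]
  · intro j hj
    rcases lt_or_gt_of_ne hj with hj | hj
    · rw [qbin_of_neg (by simpa using hj), mul_zero]
    · rw [qbin_of_lt (by simpa using hj), mul_zero]

lemma bilateralSum_succ (hq : ∀ n : ℕ, q ^ (n + 1) ≠ 1) (hq0 : q ≠ 0) (n : ℕ) :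
    bilateralSum q (n + 1) = bilateralSum q n := by
  have hexpand : ∀ j : ℤ, bilateralCoeff q j * qbin q (2 * (n + 1)) ((n + 1 : ℕ) + j) =
      bilateralCoeff q j * qbin q (2 * n) (n + j) +
        bilateralCoeff q j * q ^ ((n : ℤ) + 1 + j) * qbin q (2 * n) (n + 1 + j) +
        bilateralCoeff q j * q ^ ((n : ℤ) + 1 - j) * qbin q (2 * n + 1) (n + j) := by
    intro j
    rw [show 2 * (n + 1) = 2 * n + 2 by ring,
      show ((n + 1 : ℕ) : ℤ) + j = n + j + 1 by push_cast; ring, qbin_add_two hq]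
    push_cast
    ring_nf
  have hleft :
      ∑' j, bilateralCoeff q j * q ^ ((n : ℤ) + 1 + j) * qbin q (2 * n) (n + 1 + j) = 0 :=
    tsum_eq_zero_of_comp_eq_neg (σ := fun j => -j - 2) (fun j => by ring) fun j => by
      rw [qbin_of_add_eq (k := n + 1 + j) (by push_cast; ring), bilateralCoeff_neg_sub_two hq0]
      ring
  have hright :
      ∑' j, bilateralCoeff q j * q ^ ((n : ℤ) + 1 - j) * qbin q (2 * n + 1) (n + j) = 0 :=
    tsum_eq_zero_of_comp_eq_neg (σ := fun j => 1 - j) (fun j => by ring) fun j => by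
      rw [qbin_of_add_eq (k := n + j) (by push_cast; ring), bilateralCoeff_one_sub hq0]
      ring
  have hsum₀ := summable_mul_qbin (q := q) (bilateralCoeff q) (2 * n)
    (add_right_injective (n : ℤ))
  have hsum₁ := summable_mul_qbin (q := q) (fun j => bilateralCoeff q j * q ^ ((n : ℤ) + 1 + j))
    (2 * n) (add_right_injective ((n : ℤ) + 1))
  have hsum₂ := summable_mul_qbin (q := q) (fun j => bilateralCoeff q j * q ^ ((n : ℤ) + 1 - j))
    (2 * n + 1) (add_right_injective (n : ℤ))
  rw [bilateralSum, bilateralSum, tsum_congr hexpand, (hsum₀.add hsum₁).tsum_add hsum₂,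
    hsum₀.tsum_add hsum₁, hleft, hright, add_zero, add_zero]

lemma bilateralSum_eq_one (hq : ∀ n : ℕ, q ^ (n + 1) ≠ 1) (hq0 : q ≠ 0) (n : ℕ) :
    bilateralSum q n = 1 := by
  induction n with
  | zero => exact bilateralSum_zero
  | succ n ih => rw [bilateralSum_succ hq hq0, ih]

end BilateralSum

section Alpha

variable {q : ℂ} {α : ℕ → ℂ}

lemma bilateralCoeff_zero : bilateralCoeff q 0 = 1 := by
  simp [bilateralCoeff]

lemma bilateralCoeff_add_bilateralCoeff_neg
    (hα1 : ∀ n : ℕ, 1 ≤ n → α (3 * n - 1) = -q ^ (6 * n ^ 2 - 5 * n + 1))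
    (hα2 : ∀ n : ℕ, 1 ≤ n → α (3 * n) = q ^ (6 * n ^ 2 - n) + q ^ (6 * n ^ 2 + n))
    (hα3 : ∀ n : ℕ, α (3 * n + 1) = -q ^ (6 * n ^ 2 + 5 * n + 1)) {i : ℕ} (hi : i ≠ 0) :
    bilateralCoeff q i + bilateralCoeff q (-i) = α i := by
  obtain ⟨k, rfl | rfl | rfl⟩ : ∃ k, i = 3 * k ∨ i = 3 * k + 1 ∨ i = 3 * k + 2 :=
    ⟨i / 3, by omega⟩
  · have hk : k ≤ 6 * k ^ 2 := by nlinarith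
    rw [hα2 k (by omega), Nat.cast_mul, Nat.cast_ofNat, ← mul_neg, bilateralCoeff_three_mul,
      bilateralCoeff_three_mul, add_comm,
      show 6 * (-(k : ℤ)) ^ 2 + -k = ((6 * k ^ 2 - k : ℕ) : ℤ) by
        push_cast [Nat.cast_sub hk]; ring,
      show 6 * (k : ℤ) ^ 2 + k = ((6 * k ^ 2 + k : ℕ) : ℤ) by push_cast; ring,
      zpow_natCast, zpow_natCast]
  · rw [hα3 k, show -((3 * k + 1 : ℕ) : ℤ) = 3 * (-k - 1) + 2 by push_cast; ring,
      bilateralCoeff_three_mul_add_two, add_zero, Nat.cast_add, Nat.cast_mul, Nat.cast_ofNat,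
      Nat.cast_one, bilateralCoeff_three_mul_add_one,
      show 6 * (k : ℤ) ^ 2 + 5 * k + 1 = ((6 * k ^ 2 + 5 * k + 1 : ℕ) : ℤ) by push_cast; ring,
      zpow_natCast]
  · have hexp : 6 * (k + 1) ^ 2 - 5 * (k + 1) + 1 = 6 * k ^ 2 + 7 * k + 2 := by
      rw [Nat.sub_eq_of_eq_add (by ring : 6 * (k + 1) ^ 2 = 6 * k ^ 2 + 7 * k + 1 + 5 * (k + 1))]
    rw [show 3 * k + 2 = 3 * (k + 1) - 1 by omega, hα1 (k + 1) (by omega), hexp,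
      show ((3 * (k + 1) - 1 : ℕ) : ℤ) = 3 * k + 2 by omega, bilateralCoeff_three_mul_add_two,
      zero_add, show -(3 * (k : ℤ) + 2) = 3 * (-k - 1) + 1 by ring,
      bilateralCoeff_three_mul_add_one,
      show 6 * (-(k : ℤ) - 1) ^ 2 + 5 * (-k - 1) + 1 = ((6 * k ^ 2 + 7 * k + 2 : ℕ) : ℤ) by
        push_cast; ring,
      zpow_natCast]

lemma sum_range_mul_qbin_eq_bilateralSum (hα0 : α 0 = 1)
    (hα1 : ∀ n : ℕ, 1 ≤ n → α (3 * n - 1) = -q ^ (6 * n ^ 2 - 5 * n + 1))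
    (hα2 : ∀ n : ℕ, 1 ≤ n → α (3 * n) = q ^ (6 * n ^ 2 - n) + q ^ (6 * n ^ 2 + n))
    (hα3 : ∀ n : ℕ, α (3 * n + 1) = -q ^ (6 * n ^ 2 + 5 * n + 1)) (n : ℕ) :
    ∑ i ∈ Finset.range (n + 1), α i * qbin q (2 * n) (n + i) = bilateralSum q n := by
  have hf := summable_mul_qbin (q := q) (bilateralCoeff q) (2 * n) (add_right_injective (n : ℤ))
  have hsplit := hf.hasSum.nat_add_neg.tsum_eq
  have hterm : ∀ i : ℕ, bilateralCoeff q (i + 1 : ℕ) * qbin q (2 * n) (n + (i + 1 : ℕ)) +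
      bilateralCoeff q (-(i + 1 : ℕ)) * qbin q (2 * n) (n + -(i + 1 : ℕ)) =
      α (i + 1) * qbin q (2 * n) (n + (i + 1 : ℕ)) := fun i => by
    rw [qbin_of_add_eq (k := n + (i + 1 : ℕ)) (k' := n + -(i + 1 : ℕ)) (by push_cast; ring),
      ← add_mul,
      bilateralCoeff_add_bilateralCoeff_neg hα1 hα2 hα3 i.succ_ne_zero]
  rw [tsum_eq_sum (s := Finset.range (n + 1)) ?_, Finset.sum_range_succ', ← bilateralSum]
    at hsplit
  · rw [Finset.sum_range_succ']
    simp only [hterm, Nat.cast_zero, neg_zero, add_zero, bilateralCoeff_zero, hα0] at hsplit ⊢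
    linear_combination hsplit
  · intro i hi
    rw [Finset.mem_range, not_lt] at hi
    rw [qbin_of_lt (by omega), qbin_of_neg (by omega), mul_zero, mul_zero, add_zero]

end Alpha

theorem stmt2 (q : ℂ) (hq0 : 0 < ‖q‖) (hq1 : ‖q‖ < 1)
    (α : ℕ → ℂ) (hα0 : α 0 = 1)
    (hα1 : ∀ n : ℕ, 1 ≤ n → α (3 * n - 1) = -q ^ (6 * n ^ 2 - 5 * n + 1))
    (hα2 : ∀ n : ℕ, 1 ≤ n → α (3 * n) = q ^ (6 * n ^ 2 - n) + q ^ (6 * n ^ 2 + n))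
    (hα3 : ∀ n : ℕ, α (3 * n + 1) = -q ^ (6 * n ^ 2 + 5 * n + 1)) :
    ∀ n : ℕ, 1 / qPoch q q (2 * n) =
      ∑ i ∈ Finset.range (n + 1), α i / (qPoch q q (n - i) * qPoch q q (n + i)) := by
  have hq : ∀ k : ℕ, q ^ (k + 1) ≠ 1 := fun k h => by
    have := pow_lt_one₀ (norm_nonneg q) hq1 k.succ_ne_zero
    rw [← norm_pow, h, norm_one] at this
    exact this.false
  intro n
  calc 1 / qPoch q q (2 * n) = bilateralSum q n / qPoch q q (2 * n) := by
        rw [bilateralSum_eq_one hq (norm_pos_iff.mp hq0)]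
    _ = ∑ i ∈ Finset.range (n + 1), α i * qbin q (2 * n) (n + i) / qPoch q q (2 * n) := by
        rw [← sum_range_mul_qbin_eq_bilateralSum hα0 hα1 hα2 hα3, Finset.sum_div]
    _ = _ := Finset.sum_congr rfl fun i hi => by
        have hi : i ≤ n := Finset.mem_range_succ_iff.mp hi
        rw [← Nat.cast_add, qbin_of_le (by omega), show 2 * n - (n + i) = n - i by omega]
        have hP := qPoch_ne_zero hq (2 * n)
        field_simp
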